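/- Let k ∈ ℤ and n ≥ 1. The modified martingale transform T_{k,n}(f) = Σ_{I∈𝒟} Σ_{J∈I_{k,n}} ⟨f,ψ_J⟩ ψ_I is bounded on BMO(ℝ) with operator norm ≲ 2^{|k|/2}(log(n+1) + max(-k,0) + 1)^{1/2}, with implicit constant independent of k and n. -/

import Mathlib

/-!
Write `M = max (|I|, |J|)` for `J ∈ I_{k,n}`. The left endpoint of such a `J` lies in one of four
windows of length `M`, fixed by `I`, according to which endpoints of `I` and `J` span `I ∪ J`.
Hence `I_{k,n}` sits in a set of `≲ 2^{k⁺}` intervals, and Cauchy–Schwarz bounds `(T a)_I²` by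
`2^{k⁺}` times the sum of `a_J²` over these windows.
Now sum over `I ⊆ Q`. If `(n + 1) M ≤ |Q|`, all the windows lie in a fixed dilate of `Q`, and each
`J` lies in the windows of `≲ 2^{k⁻}` of the `I`, so the packing condition on that dilate
suffices. Otherwise each window carries `≲ B² M = B² 2^{k⁻} |I|`; the `I ⊆ Q` of one scale have
total length `≤ |Q|`, and only `log₂ (n + 1) + k⁻ + 1` scales satisfy `|I| ≤ |Q| < (n + 1) M`.
-/

/-- Length of a dyadic interval of scale `j`. -/
noncomputable def dLen (j : ℤ) : ℝ := (2 : ℝ) ^ (-j)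

/-- The dyadic interval indexed by `p = (j,k)`, namely `2^{-j}[k,k+1]`. -/
noncomputable def dIcc (p : ℤ × ℤ) : Set ℝ :=
  Set.Icc ((p.2 : ℝ) * dLen p.1) (((p.2 : ℝ) + 1) * dLen p.1)

/-- Relative distance `rdist(I,J) = diam(I∪J)/max(|I|,|J|)` between dyadic intervals. -/
noncomputable def dRdist (p q : ℤ × ℤ) : ℝ :=
  (max (((p.2 : ℝ) + 1) * dLen p.1) (((q.2 : ℝ) + 1) * dLen q.1)
      - min ((p.2 : ℝ) * dLen p.1) ((q.2 : ℝ) * dLen q.1)) / max (dLen p.1) (dLen q.1)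

open scoped Finset

section DoubleCounting

variable {ι κ : Type*} [DecidableEq κ] (s : Finset ι) (t : ι → Finset κ) (f : κ → ℝ)

lemma sum_sum_eq_sum_biUnion_card_mul :
    ∑ i ∈ s, ∑ q ∈ t i, f q = ∑ q ∈ s.biUnion t, #{i ∈ s | q ∈ t i} * f q := by
  rw [Finset.sum_comm' (t' := s.biUnion t) (s' := fun q => {i ∈ s | q ∈ t i})]
  · simp only [Finset.sum_const, nsmul_eq_mul]
  · intro i q
    simp only [Finset.mem_filter, Finset.mem_biUnion]
    exact ⟨fun h => ⟨⟨h.1, h.2⟩, i, h⟩, fun h => h.1⟩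

variable {f}

lemma sum_biUnion_le_sum_sum (hf : ∀ q, 0 ≤ f q) :
    ∑ q ∈ s.biUnion t, f q ≤ ∑ i ∈ s, ∑ q ∈ t i, f q := by
  rw [sum_sum_eq_sum_biUnion_card_mul]
  refine Finset.sum_le_sum fun q hq => le_mul_of_one_le_left (hf q) ?_
  obtain ⟨i, hi, hqi⟩ := Finset.mem_biUnion.mp hq
  exact_mod_cast Finset.card_pos.mpr ⟨i, Finset.mem_filter.mpr ⟨hi, hqi⟩⟩

lemma sum_sum_le_mul_sum_biUnion (hf : ∀ q, 0 ≤ f q) {M : ℕ}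
    (hM : ∀ q, #{i ∈ s | q ∈ t i} ≤ M) :
    ∑ i ∈ s, ∑ q ∈ t i, f q ≤ M * ∑ q ∈ s.biUnion t, f q := by
  rw [sum_sum_eq_sum_biUnion_card_mul, Finset.mul_sum]
  exact Finset.sum_le_sum fun q _ => mul_le_mul_of_nonneg_right (by exact_mod_cast hM q) (hf q)

end DoubleCounting

lemma sq_tsum_subtype_le_card_mul {ι : Type*} {S : Set ι} {t : Finset ι} (hS : S ⊆ t)
    (a : ι → ℝ) : (∑' q : S, a q) ^ 2 ≤ #t * ∑ q ∈ t, a q ^ 2 := by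
  have hsum : ∑' q : S, a q = ∑ q ∈ t, S.indicator a q := by
    rw [tsum_subtype S a]
    exact tsum_eq_sum fun q hq => Set.indicator_of_notMem (fun h => hq (hS h)) a
  rw [hsum]
  refine sq_sum_le_card_mul_sum_sq.trans ?_
  refine mul_le_mul_of_nonneg_left (Finset.sum_le_sum fun q _ => ?_) (Nat.cast_nonneg _)
  by_cases hq : q ∈ S
  · rw [Set.indicator_of_mem hq]
  · rw [Set.indicator_of_notMem hq]
    simpa using sq_nonneg (a q)

lemma natCast_toNat_le {z : ℤ} {y : ℝ} (h : (z : ℝ) ≤ y) (hy : 0 ≤ y) : (z.toNat : ℝ) ≤ y := by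
  rcases le_total 0 z with hz | hz
  · rwa [← Int.cast_natCast, Int.toNat_of_nonneg hz]
  · rwa [Int.toNat_eq_zero.mpr hz, Nat.cast_zero]

lemma dLen_pos (j : ℤ) : 0 < dLen j := zpow_pos two_pos _

lemma logb_dLen (j : ℤ) : Real.logb 2 (dLen j) = -j := by
  rw [dLen, ← Real.rpow_intCast, Real.logb_rpow two_pos (by norm_num), Int.cast_neg]

lemma dLen_sub_natCast (j : ℤ) (N : ℕ) : dLen (j - N) = dLen j * 2 ^ N := by
  rw [dLen, dLen, neg_sub', sub_neg_eq_add, zpow_add₀ two_ne_zero, zpow_natCast]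

lemma antitone_dLen : Antitone dLen := fun _ _ h =>
  zpow_le_zpow_right₀ one_le_two (neg_le_neg h)

lemma max_dLen_eq_left (j k : ℤ) :
    max (dLen j) (dLen (j + k)) = dLen j * 2 ^ (-k).toNat := by
  rw [← antitone_dLen.map_min, ← dLen_sub_natCast]
  congr 1
  omega

lemma max_dLen_eq_right (j k : ℤ) :
    max (dLen j) (dLen (j + k)) = dLen (j + k) * 2 ^ k.toNat := by
  rw [← antitone_dLen.map_min, ← dLen_sub_natCast]
  congr 1
  omega

lemma dIcc_subset_Icc_iff {p : ℤ × ℤ} {u v : ℝ} :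
    dIcc p ⊆ Set.Icc u v ↔ u ≤ p.2 * dLen p.1 ∧ (p.2 + 1) * dLen p.1 ≤ v :=
  Set.Icc_subset_Icc_iff (by nlinarith [dLen_pos p.1])

noncomputable def dyadicWindow (s : ℤ) (x : ℝ) (D : ℕ) : Finset (ℤ × ℤ) :=
  (Finset.Icc ⌈x / dLen s⌉ ⌊x / dLen s + D⌋).image (s, ·)

lemma mem_dyadicWindow {s : ℤ} {x : ℝ} {D : ℕ} {q : ℤ × ℤ} :
    q ∈ dyadicWindow s x D ↔ q.1 = s ∧ x ≤ q.2 * dLen s ∧ q.2 * dLen s ≤ x + D * dLen s := by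
  have hL := dLen_pos s
  have hx : x / dLen s + D = (x + D * dLen s) / dLen s := by field_simp
  obtain ⟨j, m⟩ := q
  simp only [dyadicWindow, Finset.mem_image, Finset.mem_Icc, Int.ceil_le, Int.le_floor, hx,
    div_le_iff₀ hL, le_div_iff₀ hL, Prod.mk.injEq]
  constructor
  · rintro ⟨m, hm, rfl, rfl⟩
    exact ⟨rfl, hm⟩
  · rintro ⟨rfl, hm⟩
    exact ⟨m, hm, rfl, rfl⟩

lemma card_dyadicWindow_le (s : ℤ) (x : ℝ) (D : ℕ) : #(dyadicWindow s x D) ≤ D + 1 := by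
  refine Finset.card_image_le.trans ?_
  rw [Int.card_Icc, Int.toNat_le, Int.floor_add_natCast]
  have := Int.floor_le_ceil (x / dLen s)
  push_cast
  omega

lemma dIcc_subset_of_mem_dyadicWindow {s : ℤ} {x : ℝ} {D : ℕ} {q : ℤ × ℤ}
    (hq : q ∈ dyadicWindow s x D) : dIcc q ⊆ Set.Icc x (x + (D + 1) * dLen s) := by
  obtain ⟨rfl, h1, h2⟩ := mem_dyadicWindow.mp hq
  exact Set.Icc_subset_Icc h1 (by linarith)

lemma card_biUnion_dyadicWindow_le {ι : Type*} [Fintype ι] (s : ℤ) (x : ι → ℝ) (D : ℕ) :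
    #(Finset.univ.biUnion fun i => dyadicWindow s (x i) D) ≤ Fintype.card ι * (D + 1) := by
  refine Finset.card_biUnion_le.trans ?_
  calc _ ≤ #(Finset.univ : Finset ι) • (D + 1) :=
        Finset.sum_le_card_nsmul _ _ _ fun i _ => card_dyadicWindow_le s (x i) D
    _ = Fintype.card ι * (D + 1) := by rw [Finset.card_univ, smul_eq_mul]

-- With `a p = ⟨f, ψ_I⟩` for `I = dIcc p`, this packing condition is the wavelet form of
-- `‖f‖_BMO ≤ B`.
def IsCarleson (a : ℤ × ℤ → ℝ) (B : ℝ) : Prop :=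
  ∀ u v : ℝ, u < v →
    ∑' p : {p : ℤ × ℤ // dIcc p ⊆ Set.Icc u v}, ENNReal.ofReal ((a p.1) ^ 2)
      ≤ ENNReal.ofReal (B ^ 2 * (v - u))

lemma IsCarleson.sum_sq_le {a : ℤ × ℤ → ℝ} {B x y : ℝ} (ha : IsCarleson a B) (hxy : x < y)
    {t : Finset (ℤ × ℤ)} (ht : ∀ q ∈ t, dIcc q ⊆ Set.Icc x y) :
    ∑ q ∈ t, a q ^ 2 ≤ B ^ 2 * (y - x) := by
  classical
  rw [← ENNReal.ofReal_le_ofReal_iff (mul_nonneg (sq_nonneg B) (sub_nonneg.mpr hxy.le)),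
    ENNReal.ofReal_sum_of_nonneg fun q _ => sq_nonneg (a q)]
  calc ∑ q ∈ t, ENNReal.ofReal (a q ^ 2)
      = ∑ q ∈ t.subtype (fun q => dIcc q ⊆ Set.Icc x y), ENNReal.ofReal (a q.1 ^ 2) :=
        (Finset.sum_subtype_of_mem (fun q => ENNReal.ofReal (a q ^ 2)) ht).symm
    _ ≤ _ := ENNReal.sum_le_tsum _
    _ ≤ _ := ha x y hxy

lemma isCarleson_of_sum_sq_le {a : ℤ × ℤ → ℝ} {B : ℝ}
    (h : ∀ u v : ℝ, u < v → ∀ t : Finset (ℤ × ℤ), (∀ q ∈ t, dIcc q ⊆ Set.Icc u v) →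
      ∑ q ∈ t, a q ^ 2 ≤ B ^ 2 * (v - u)) :
    IsCarleson a B := by
  intro u v huv
  refine ENNReal.summable.tsum_le_of_sum_le fun s => ?_
  calc ∑ q ∈ s, ENNReal.ofReal (a q ^ 2)
      = ∑ q ∈ s.map (Function.Embedding.subtype _), ENNReal.ofReal (a q ^ 2) := by
        rw [Finset.sum_map]
        rfl
    _ = ENNReal.ofReal (∑ q ∈ s.map (Function.Embedding.subtype _), a q ^ 2) :=
        (ENNReal.ofReal_sum_of_nonneg fun q _ => sq_nonneg (a q)).symm
    _ ≤ _ := by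
      refine ENNReal.ofReal_le_ofReal (h u v huv _ ?_)
      simp only [Finset.mem_map, Function.Embedding.coe_subtype]
      rintro _ ⟨q, -, rfl⟩
      exact q.2

-- If `n ≤ rdist(I, J) < n + 1`, the left endpoint of `J` lies in `[x, x + max |I| |J|]`, where
-- `x` is the left endpoint of `I` plus one of these offsets; which one depends on which endpoints
-- of `I` and `J` span `I ∪ J`.
noncomputable def rdistOffset (N L l : ℝ) : Fin 4 → ℝ :=
  ![N * max L l - l, 0, L - (N + 1) * max L l, -max L l]

lemma exists_rdistOffset {N L l α β : ℝ} (hL : 0 ≤ L) (hl : 0 ≤ l)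
    (h1 : N * max L l ≤ max (α + L) (β + l) - min α β)
    (h2 : max (α + L) (β + l) - min α β < (N + 1) * max L l) :
    ∃ i, α + rdistOffset N L l i ≤ β ∧ β ≤ α + rdistOffset N L l i + max L l := by
  have hLM := le_max_left L l
  have hlM := le_max_right L l
  rcases le_total α β with hαβ | hβα <;> rcases le_total (α + L) (β + l) with hr | hr
  · rw [min_eq_left hαβ, max_eq_right hr] at h1 h2
    refine ⟨0, ?_, ?_⟩ <;> simp only [rdistOffset, Matrix.cons_val] <;> linarith
  · refine ⟨1, ?_, ?_⟩ <;> simp only [rdistOffset, Matrix.cons_val] <;> linarith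
  · refine ⟨3, ?_, ?_⟩ <;> simp only [rdistOffset, Matrix.cons_val] <;> linarith
  · rw [min_eq_right hβα, max_eq_left hr] at h1 h2
    refine ⟨2, ?_, ?_⟩ <;> simp only [rdistOffset, Matrix.cons_val] <;> linarith

lemma rdistOffset_mem_Icc {N L l : ℝ} (hN : 0 ≤ N) (hL : 0 ≤ L) (hl : 0 ≤ l) (i : Fin 4) :
    rdistOffset N L l i ∈ Set.Icc (-((N + 1) * max L l)) (N * max L l) := by
  have hLM := le_max_left L l
  have hlM := le_max_right L l
  have hNM := mul_nonneg hN (hL.trans hLM)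
  fin_cases i <;> refine ⟨?_, ?_⟩ <;>
    simp only [rdistOffset, Fin.zero_eta, Fin.mk_one, Fin.reduceFinMk, Matrix.cons_val] <;> nlinarith

-- `shell k n p` is `I_{k,n}` for `I = dIcc p`, and `transform k n a` are the coefficients of
-- `T_{k,n} f`.
def shell (k : ℤ) (n : ℕ) (p : ℤ × ℤ) : Set (ℤ × ℤ) :=
  {q | q.1 = p.1 + k ∧ (n : ℝ) ≤ dRdist p q ∧ dRdist p q < (n : ℝ) + 1}

noncomputable def transform (k : ℤ) (n : ℕ) (a : ℤ × ℤ → ℝ) (p : ℤ × ℤ) : ℝ :=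
  ∑' q : shell k n p, a q

noncomputable def dyadicBlocks (k : ℤ) (n : ℕ) (p : ℤ × ℤ) : Finset (ℤ × ℤ) :=
  Finset.univ.biUnion fun i =>
    dyadicWindow (p.1 + k) (p.2 * dLen p.1 + rdistOffset n (dLen p.1) (dLen (p.1 + k)) i)
      (2 ^ k.toNat)

section Blocks

variable {k : ℤ} {n : ℕ} {p q : ℤ × ℤ}

lemma mem_dyadicBlocks :
    q ∈ dyadicBlocks k n p ↔ ∃ i, q.1 = p.1 + k ∧
      p.2 * dLen p.1 + rdistOffset n (dLen p.1) (dLen (p.1 + k)) i ≤ q.2 * dLen (p.1 + k) ∧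
      q.2 * dLen (p.1 + k) ≤ p.2 * dLen p.1 + rdistOffset n (dLen p.1) (dLen (p.1 + k)) i
        + max (dLen p.1) (dLen (p.1 + k)) := by
  simp only [dyadicBlocks, Finset.mem_biUnion, Finset.mem_univ, true_and, mem_dyadicWindow,
    max_dLen_eq_right, Nat.cast_pow, Nat.cast_ofNat, mul_comm (dLen (p.1 + k))]

lemma shell_subset_dyadicBlocks : shell k n p ⊆ dyadicBlocks k n p := by
  rintro ⟨j, m⟩ ⟨hj, h1, h2⟩
  dsimp only at hj
  subst hj
  have hM : 0 < max (dLen p.1) (dLen (p.1 + k)) := lt_max_of_lt_left (dLen_pos _)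
  rw [dRdist, le_div_iff₀ hM, add_one_mul, add_one_mul] at h1
  rw [dRdist, div_lt_iff₀ hM, add_one_mul, add_one_mul] at h2
  obtain ⟨i, hi⟩ := exists_rdistOffset (dLen_pos _).le (dLen_pos _).le h1 h2
  exact mem_dyadicBlocks.mpr ⟨i, rfl, hi⟩

lemma card_dyadicBlocks_le : #(dyadicBlocks k n p) ≤ 4 * (2 ^ k.toNat + 1) :=
  card_biUnion_dyadicWindow_le _ _ _

lemma sq_transform_le (a : ℤ × ℤ → ℝ) :
    transform k n a p ^ 2 ≤ 4 * (2 ^ k.toNat + 1) * ∑ q ∈ dyadicBlocks k n p, a q ^ 2 := by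
  refine (sq_tsum_subtype_le_card_mul shell_subset_dyadicBlocks a).trans ?_
  gcongr
  exact_mod_cast card_dyadicBlocks_le

lemma sum_sq_dyadicBlocks_le {a : ℤ × ℤ → ℝ} {B : ℝ} (ha : IsCarleson a B) :
    ∑ q ∈ dyadicBlocks k n p, a q ^ 2 ≤ 8 * B ^ 2 * max (dLen p.1) (dLen (p.1 + k)) := by
  set M := max (dLen p.1) (dLen (p.1 + k))
  have hwindow : ((2 ^ k.toNat : ℕ) + 1 : ℝ) * dLen (p.1 + k) ≤ 2 * M := by
    have := max_dLen_eq_right p.1 k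
    have := le_max_right (dLen p.1) (dLen (p.1 + k))
    push_cast
    linarith
  calc ∑ q ∈ dyadicBlocks k n p, a q ^ 2
      ≤ ∑ i, ∑ q ∈ dyadicWindow (p.1 + k)
          (p.2 * dLen p.1 + rdistOffset n (dLen p.1) (dLen (p.1 + k)) i) (2 ^ k.toNat), a q ^ 2 :=
        sum_biUnion_le_sum_sum _ _ fun q => sq_nonneg (a q)
    _ ≤ ∑ _i : Fin 4, B ^ 2 * (2 * M) := by
        refine Finset.sum_le_sum fun i _ => ?_
        refine (ha.sum_sq_le ?_ fun q hq => dIcc_subset_of_mem_dyadicWindow hq).trans ?_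
        · have := dLen_pos (p.1 + k)
          nlinarith
        · rw [add_sub_cancel_left]
          gcongr
    _ = 8 * B ^ 2 * M := by
        rw [Finset.sum_const, Finset.card_univ, Fintype.card_fin, nsmul_eq_mul]
        ring

lemma dIcc_subset_of_mem_dyadicBlocks (hq : q ∈ dyadicBlocks k n p) :
    dIcc q ⊆ Set.Icc (p.2 * dLen p.1 - (n + 1) * max (dLen p.1) (dLen (p.1 + k)))
      (p.2 * dLen p.1 + (n + 2) * max (dLen p.1) (dLen (p.1 + k))) := by
  obtain ⟨i, hq1, h1, h2⟩ := mem_dyadicBlocks.mp hq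
  obtain ⟨hlo, hhi⟩ := rdistOffset_mem_Icc n.cast_nonneg (dLen_pos p.1).le (dLen_pos (p.1 + k)).le i
  have := le_max_right (dLen p.1) (dLen (p.1 + k))
  rw [dIcc, hq1]
  exact Set.Icc_subset_Icc (by linarith) (by linarith)

lemma card_filter_mem_dyadicBlocks_le (s : Finset (ℤ × ℤ)) (q : ℤ × ℤ) :
    #{p ∈ s | q ∈ dyadicBlocks k n p} ≤ 4 * (2 ^ (-k).toNat + 1) := by
  refine (Finset.card_le_card ?_).trans (card_biUnion_dyadicWindow_le (q.1 - k)
    (fun i => q.2 * dLen q.1 - rdistOffset n (dLen (q.1 - k)) (dLen q.1) i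
      - max (dLen (q.1 - k)) (dLen q.1)) (2 ^ (-k).toNat))
  intro p hp
  obtain ⟨i, hq1, h1, h2⟩ := mem_dyadicBlocks.mp (Finset.mem_filter.mp hp).2
  obtain ⟨j, m⟩ := q
  dsimp only at hq1 ⊢
  subst hq1
  have hM := max_dLen_eq_left p.1 k
  simp only [add_sub_cancel_right, Finset.mem_biUnion, Finset.mem_univ, true_and,
    mem_dyadicWindow]
  refine ⟨i, by linarith, ?_⟩
  push_cast
  linarith

end Blocks

lemma card_mul_dLen_le {u v : ℝ} (huv : u ≤ v) {j : ℤ} {s : Finset (ℤ × ℤ)}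
    (hj : ∀ p ∈ s, p.1 = j) (hs : ∀ p ∈ s, dIcc p ⊆ Set.Icc u v) : #s * dLen j ≤ v - u := by
  have hL := dLen_pos j
  have hsub : s.image Prod.snd ⊆ Finset.Ico ⌈u / dLen j⌉ ⌊v / dLen j⌋ := by
    intro m hm
    obtain ⟨p, hp, rfl⟩ := Finset.mem_image.mp hm
    obtain ⟨h1, h2⟩ := dIcc_subset_Icc_iff.mp (hs p hp)
    rw [hj p hp] at h1 h2
    rw [Finset.mem_Ico, Int.ceil_le, Int.lt_iff_add_one_le, Int.le_floor, div_le_iff₀ hL,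
      le_div_iff₀ hL]
    exact ⟨h1, by exact_mod_cast h2⟩
  have hcard : #s = #(s.image Prod.snd) :=
    (Finset.card_image_of_injOn fun p hp q hq h => Prod.ext ((hj p hp).trans (hj q hq).symm) h).symm
  have hIco : (#(Finset.Ico ⌈u / dLen j⌉ ⌊v / dLen j⌋) : ℝ) ≤ (v - u) / dLen j := by
    rw [Int.card_Ico]
    refine natCast_toNat_le ?_ (div_nonneg (sub_nonneg.mpr huv) hL.le)
    have := Int.floor_le (v / dLen j)
    have := Int.le_ceil (u / dLen j)
    rw [sub_div]
    push_cast
    linarith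
  calc (#s : ℝ) * dLen j ≤ (v - u) / dLen j * dLen j := by
        rw [hcard]
        gcongr
        exact (Nat.cast_le.mpr (Finset.card_le_card hsub)).trans hIco
    _ = v - u := div_mul_cancel₀ _ hL.ne'

lemma sum_dLen_le_card_image_mul {u v : ℝ} (huv : u ≤ v) {s : Finset (ℤ × ℤ)}
    (hs : ∀ p ∈ s, dIcc p ⊆ Set.Icc u v) :
    ∑ p ∈ s, dLen p.1 ≤ #(s.image Prod.fst) * (v - u) := by
  rw [← Finset.sum_fiberwise_of_maps_to fun p hp => Finset.mem_image_of_mem Prod.fst hp]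
  calc ∑ j ∈ s.image Prod.fst, ∑ p ∈ s with p.1 = j, dLen p.1
      = ∑ j ∈ s.image Prod.fst, #{p ∈ s | p.1 = j} * dLen j := by
        refine Finset.sum_congr rfl fun j _ => ?_
        rw [Finset.sum_congr rfl fun p hp => by rw [(Finset.mem_filter.mp hp).2],
          Finset.sum_const, nsmul_eq_mul]
    _ ≤ ∑ _j ∈ s.image Prod.fst, (v - u) :=
        Finset.sum_le_sum fun j _ => card_mul_dLen_le huv (fun p hp => (Finset.mem_filter.mp hp).2)
          fun p hp => hs p (Finset.mem_filter.mp hp).1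
    _ = #(s.image Prod.fst) * (v - u) := by rw [Finset.sum_const, nsmul_eq_mul]

lemma card_le_logb_add_one {T R : ℝ} (hT : 0 < T) (hR : 1 ≤ R) {t : Finset ℤ}
    (ht : ∀ j ∈ t, dLen j ≤ T ∧ T < R * dLen j) : (#t : ℝ) ≤ Real.logb 2 R + 1 := by
  have hsub : t ⊆ Finset.Ico ⌈-Real.logb 2 T⌉ ⌈Real.logb 2 R - Real.logb 2 T⌉ := by
    intro j hj
    obtain ⟨h1, h2⟩ := ht j hj
    have hlo := Real.logb_le_logb_of_le one_lt_two (dLen_pos j) h1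
    have hhi := Real.logb_lt_logb one_lt_two hT h2
    rw [logb_dLen] at hlo
    rw [Real.logb_mul (by positivity) (dLen_pos j).ne', logb_dLen] at hhi
    rw [Finset.mem_Ico, Int.ceil_le, Int.lt_ceil]
    constructor <;> linarith
  refine (Nat.cast_le.mpr (Finset.card_le_card hsub)).trans ?_
  rw [Int.card_Ico]
  refine natCast_toNat_le ?_ (by linarith [Real.logb_nonneg one_lt_two hR])
  have := Int.ceil_lt_add_one (Real.logb 2 R - Real.logb 2 T)
  have := Int.le_ceil (-Real.logb 2 T)
  push_cast
  linarith

section Packing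

variable {k : ℤ} {n : ℕ} {a : ℤ × ℤ → ℝ} {B u v : ℝ} {s : Finset (ℤ × ℤ)}

lemma sum_sum_sq_dyadicBlocks_le_of_small (ha : IsCarleson a B) (huv : u < v)
    (hs : ∀ p ∈ s, dIcc p ⊆ Set.Icc u v)
    (hsmall : ∀ p ∈ s, (n + 1) * max (dLen p.1) (dLen (p.1 + k)) ≤ v - u) :
    ∑ p ∈ s, ∑ q ∈ dyadicBlocks k n p, a q ^ 2
      ≤ 4 * (2 ^ (-k).toNat + 1) * (B ^ 2 * (4 * (v - u))) := by
  refine (sum_sum_le_mul_sum_biUnion s _ (fun q => sq_nonneg (a q))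
    (card_filter_mem_dyadicBlocks_le s)).trans ?_
  push_cast
  gcongr
  rw [show 4 * (v - u) = 3 * v - 2 * u - (2 * u - v) by ring]
  refine ha.sum_sq_le (by linarith) fun q hq => ?_
  obtain ⟨p, hp, hqp⟩ := Finset.mem_biUnion.mp hq
  obtain ⟨hu, hv⟩ := dIcc_subset_Icc_iff.mp (hs p hp)
  have hM := hsmall p hp
  have hL := dLen_pos p.1
  have := le_max_left (dLen p.1) (dLen (p.1 + k))
  have : (0 : ℝ) ≤ n := n.cast_nonneg
  refine (dIcc_subset_of_mem_dyadicBlocks hqp).trans (Set.Icc_subset_Icc ?_ ?_) <;> nlinarith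

lemma sum_sum_sq_dyadicBlocks_le_of_large (ha : IsCarleson a B) (huv : u < v)
    (hs : ∀ p ∈ s, dIcc p ⊆ Set.Icc u v)
    (hlarge : ∀ p ∈ s, v - u < (n + 1) * max (dLen p.1) (dLen (p.1 + k))) :
    ∑ p ∈ s, ∑ q ∈ dyadicBlocks k n p, a q ^ 2
      ≤ 8 * B ^ 2 * 2 ^ (-k).toNat * ((Real.logb 2 (n + 1) + (-k).toNat + 1) * (v - u)) := by
  have hscales : (#(s.image Prod.fst) : ℝ) ≤ Real.logb 2 (n + 1) + (-k).toNat + 1 := by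
    have hR : Real.logb 2 ((n + 1) * 2 ^ (-k).toNat) = Real.logb 2 (n + 1) + (-k).toNat := by
      rw [Real.logb_mul (by positivity) (by positivity), Real.logb_pow,
        Real.logb_self_eq_one one_lt_two, mul_one]
    rw [← hR]
    refine card_le_logb_add_one (T := v - u) (by linarith) (one_le_mul_of_one_le_of_one_le
      (by linarith [n.cast_nonneg (α := ℝ)]) (one_le_pow₀ one_le_two)) fun j hj => ?_
    obtain ⟨p, hp, rfl⟩ := Finset.mem_image.mp hj
    obtain ⟨hu, hv⟩ := dIcc_subset_Icc_iff.mp (hs p hp)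
    have := hlarge p hp
    rw [max_dLen_eq_left] at this
    constructor <;> linarith
  calc ∑ p ∈ s, ∑ q ∈ dyadicBlocks k n p, a q ^ 2
      ≤ ∑ p ∈ s, 8 * B ^ 2 * 2 ^ (-k).toNat * dLen p.1 := by
        refine Finset.sum_le_sum fun p _ => (sum_sq_dyadicBlocks_le ha).trans_eq ?_
        rw [max_dLen_eq_left]
        ring
    _ = 8 * B ^ 2 * 2 ^ (-k).toNat * ∑ p ∈ s, dLen p.1 := (Finset.mul_sum _ _ _).symm
    _ ≤ 8 * B ^ 2 * 2 ^ (-k).toNat * (#(s.image Prod.fst) * (v - u)) := by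
        gcongr
        exact sum_dLen_le_card_image_mul huv.le hs
    _ ≤ 8 * B ^ 2 * 2 ^ (-k).toNat * ((Real.logb 2 (n + 1) + (-k).toNat + 1) * (v - u)) :=
        mul_le_mul_of_nonneg_left (mul_le_mul_of_nonneg_right hscales (sub_nonneg.mpr huv.le))
          (by positivity)

end Packing

lemma sum_sq_transform_le {k : ℤ} {n : ℕ} {a : ℤ × ℤ → ℝ} {B u v : ℝ} {s : Finset (ℤ × ℤ)}
    (ha : IsCarleson a B) (huv : u < v) (hs : ∀ p ∈ s, dIcc p ⊆ Set.Icc u v) :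
    ∑ p ∈ s, transform k n a p ^ 2
      ≤ 320 * 2 ^ k.natAbs * (Real.logb 2 (n + 1) + (-k).toNat + 1) * (B ^ 2 * (v - u)) := by
  set X := Real.logb 2 (n + 1) + (-k).toNat + 1
  set A : ℝ := 2 ^ k.toNat
  set A' : ℝ := 2 ^ (-k).toNat
  set Q := B ^ 2 * (v - u)
  have hX : 1 ≤ X := by
    have := Real.logb_nonneg one_lt_two (by linarith [n.cast_nonneg (α := ℝ)] : (1 : ℝ) ≤ n + 1)
    have : (0 : ℝ) ≤ (-k).toNat := Nat.cast_nonneg _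
    linarith
  have hA : 1 ≤ A := one_le_pow₀ one_le_two
  have hA' : 1 ≤ A' := one_le_pow₀ one_le_two
  have hQ : 0 ≤ Q := mul_nonneg (sq_nonneg B) (sub_nonneg.mpr huv.le)
  have hsplit := Finset.sum_filter_add_sum_filter_not s
    (fun p => (n + 1) * max (dLen p.1) (dLen (p.1 + k)) ≤ v - u)
    (fun p => ∑ q ∈ dyadicBlocks k n p, a q ^ 2)
  have hsmall := sum_sum_sq_dyadicBlocks_le_of_small (k := k) (n := n) ha huv
    (fun p hp => hs p (Finset.mem_filter.mp hp).1) fun p hp => (Finset.mem_filter.mp hp).2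
  have hlarge := sum_sum_sq_dyadicBlocks_le_of_large (k := k) (n := n) ha huv
    (fun p hp => hs p (Finset.mem_filter.mp hp).1) fun p hp => not_le.mp (Finset.mem_filter.mp hp).2
  calc ∑ p ∈ s, transform k n a p ^ 2
      ≤ ∑ p ∈ s, 4 * (A + 1) * ∑ q ∈ dyadicBlocks k n p, a q ^ 2 :=
        Finset.sum_le_sum fun p _ => sq_transform_le a
    _ ≤ 4 * (A + 1) * (4 * (A' + 1) * (4 * Q) + 8 * A' * (X * Q)) := by
        rw [← Finset.mul_sum, ← hsplit]
        gcongr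
        · simpa only [mul_left_comm (B ^ 2)] using hsmall
        · simpa only [mul_assoc, mul_left_comm (B ^ 2)] using hlarge
    _ ≤ (8 * A) * (40 * A' * X * Q) := by
        have : (A' + 1) * Q ≤ 2 * A' * X * Q := by gcongr; nlinarith
        exact mul_le_mul (by linarith) (by linarith) (by positivity) (by positivity)
    _ = 320 * 2 ^ k.natAbs * X * Q := by
        rw [← Int.toNat_add_toNat_neg_eq_natAbs, pow_add]
        ring

theorem isCarleson_transform {k : ℤ} {n : ℕ} {a : ℤ × ℤ → ℝ} {B : ℝ} (ha : IsCarleson a B) :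
    IsCarleson (transform k n a) (18 * (2 : ℝ) ^ ((|k| : ℝ) / 2)
      * (Real.logb 2 ((n : ℝ) + 1) + ((max (-k) 0 : ℤ) : ℝ) + 1) ^ ((1 : ℝ) / 2) * B) := by
  have hmax : ((max (-k) 0 : ℤ) : ℝ) = (-k).toNat := by rw [← Int.toNat_eq_max, Int.cast_natCast]
  have hX : 0 ≤ Real.logb 2 ((n : ℝ) + 1) + (-k).toNat + 1 := by
    have := Real.logb_nonneg one_lt_two (by linarith [n.cast_nonneg (α := ℝ)] : (1 : ℝ) ≤ n + 1)
    positivity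
  have hpow : ((2 : ℝ) ^ ((|k| : ℝ) / 2)) ^ 2 = 2 ^ k.natAbs := by
    rw [← Real.rpow_natCast, ← Real.rpow_mul zero_le_two, Nat.cast_ofNat,
      div_mul_cancel₀ _ two_ne_zero, ← Real.rpow_natCast, Nat.cast_natAbs, Int.cast_abs]
  refine isCarleson_of_sum_sq_le fun u v huv s hs => (sum_sq_transform_le ha huv hs).trans ?_
  rw [hmax, mul_pow, mul_pow, mul_pow, hpow, ← Real.sqrt_eq_rpow, Real.sq_sqrt hX]
  have : 0 ≤ 2 ^ k.natAbs * (Real.logb 2 ((n : ℝ) + 1) + (-k).toNat + 1) * (B ^ 2 * (v - u)) := by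
    have := sub_nonneg.mpr huv.le
    positivity
  nlinarith

/-- The modified martingale transform `T_{k,n}`, expressed on wavelet coefficients
(`a_I = ⟨f,ψ_I⟩`, with the coefficients of `T_{k,n} f` given by `I ↦ Σ_{J∈I_{k,n}} a_J`),
is bounded on BMO(ℝ) with operator norm `≲ 2^{|k|/2}(log₂(n+1) + max(-k,0) + 1)^{1/2}`,
with an absolute implicit constant independent of `f`, `k` and `n`. -/
theorem stmt6 :
    ∃ C : ℝ, 0 < C ∧
      ∀ (a : ℤ × ℤ → ℝ) (B : ℝ) (k : ℤ) (n : ℕ), 1 ≤ n → 0 ≤ B →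
        (∀ u v : ℝ, u < v →
          ∑' p : {p : ℤ × ℤ // dIcc p ⊆ Set.Icc u v}, ENNReal.ofReal ((a p.1) ^ 2)
            ≤ ENNReal.ofReal (B ^ 2 * (v - u))) →
        ∀ u v : ℝ, u < v →
          ∑' p : {p : ℤ × ℤ // dIcc p ⊆ Set.Icc u v},
              ENNReal.ofReal
                ((∑' q : {q : ℤ × ℤ // q.1 = p.1.1 + k ∧ (n : ℝ) ≤ dRdist p.1 q ∧
                    dRdist p.1 q < (n : ℝ) + 1}, a q) ^ 2)
            ≤ ENNReal.ofReal
                ((C * (2 : ℝ) ^ ((|k| : ℝ) / 2)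
                    * (Real.logb 2 ((n : ℝ) + 1) + ((max (-k) 0 : ℤ) : ℝ) + 1) ^ ((1 : ℝ) / 2)
                    * B) ^ 2 * (v - u)) :=
  ⟨18, by norm_num, fun _ _ _ _ _ _ ha => isCarleson_transform ha⟩
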